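/- arXiv:2405.07019 — 3 statements merged into one kernel-verified Lean document; each statement's English description precedes it below -/
import Mathlib

section
/- Let (S, +) be a commutative semigroup and A ⊆ S a 2-CR-set with witness r ∈ ℕ. Then A − A is an IP_r*-set in S: for every finite sequence x_1, ..., x_r in S there exist a nonempty H ⊆ {1,...,r} and u, v ∈ A with u + Σ_{t∈H} x_t = v. -/
/-- The sum of the values of `f` over a finite index set `H` in a commutative
semigroup (which has no zero, hence the `Option`): `none` iff `H = ∅`. -/
def finsetSum {S : Type*} [AddCommSemigroup S] (f : ℕ → S) (H : Finset ℕ) : Option S :=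
  match (H.sort (· ≤ ·)).map f with
  | [] => none
  | a :: l => some (l.foldl (· + ·) a)

/-- `A` is a 2-CR-set with witness `r`: for every pair of sequences `f, g : ℕ → S`
there are `a ∈ S` and a nonempty `H ⊆ {1, …, r}` with `a + ∑_{t ∈ H} f t ∈ A` and
`a + ∑_{t ∈ H} g t ∈ A`. -/
def Is2CRSetWith {S : Type*} [AddCommSemigroup S] (A : Set S) (r : ℕ) : Prop :=
  ∀ f g : ℕ → S, ∃ a : S, ∃ H : Finset ℕ, H ⊆ Finset.Icc 1 r ∧ H.Nonempty ∧
    (∃ s, finsetSum f H = some s ∧ a + s ∈ A) ∧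
    (∃ s, finsetSum g H = some s ∧ a + s ∈ A)

private lemma foldl_add_add {S : Type*} [AddCommSemigroup S] (f g : ℕ → S) :
    ∀ (l : List ℕ) (a b : S),
      (l.map (fun t => f t + g t)).foldl (· + ·) (a + b) =
        (l.map f).foldl (· + ·) a + (l.map g).foldl (· + ·) b := by
  intro l
  induction l with
  | nil => intro a b; simp
  | cons t l ih =>
    intro a b
    simp only [List.map_cons, List.foldl_cons]
    rw [show a + b + (f t + g t) = (a + f t) + (b + g t) from add_add_add_comm a b (f t) (g t)]
    exact ih _ _

private lemma finsetSum_double {S : Type*} [AddCommSemigroup S] (x : ℕ → S) (H : Finset ℕ)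
    (s : S) (hs : finsetSum x H = some s) :
    finsetSum (fun t => x t + x t) H = some (s + s) := by
  unfold finsetSum at *
  cases hl : (H.sort (· ≤ ·)) with
  | nil => rw [hl] at hs; simp at hs
  | cons a l =>
    rw [hl] at hs
    simp only [List.map_cons] at hs ⊢
    have := foldl_add_add x x l (x a) (x a)
    rw [this]
    simp only [Option.some_inj] at hs
    rw [hs]

/-- If `A` is a 2-CR-set with witness `r` in a commutative semigroup `(S,+)`, then
`A - A` is an `IP_r⋆`-set: for every sequence `x` there is a nonempty
`H ⊆ {1, …, r}` whose sum `s` satisfies `u + s = v` for some `u, v ∈ A`. -/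
theorem stmt_6 {S : Type*} [AddCommSemigroup S] (A : Set S) (r : ℕ)
    (hA : Is2CRSetWith A r) :
    ∀ x : ℕ → S, ∃ H : Finset ℕ, H ⊆ Finset.Icc 1 r ∧ H.Nonempty ∧
      ∃ s, finsetSum x H = some s ∧ ∃ u ∈ A, ∃ v ∈ A, u + s = v := by
  intro x
  obtain ⟨a, H, hH, hne, ⟨s, hs, haA⟩, ⟨s2, hs2, haA2⟩⟩ := hA x (fun t => x t + x t)
  have h2 : finsetSum (fun t => x t + x t) H = some (s + s) := finsetSum_double x H s hs
  rw [h2] at hs2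
  obtain rfl : s + s = s2 := Option.some_inj.mp hs2
  exact ⟨H, hH, hne, s, hs, a + s, haA, a + (s + s), haA2, by rw [← add_assoc]⟩
end

section
/- Let R be an infinite large integral domain, s ∈ ℕ, A an IP*-set in (R, +), and B an IP_s*-set in (R, +). Then there exists an IP*-set D ⊆ R such that for every r ∈ D, rR \ {0} ⊆ A·B = {ab : a ∈ A, b ∈ B}. -/
/-- `R` is a large integral domain: every nonzero ideal has finite (additive) index. -/
def IsLargeID (R : Type*) [CommRing R] [IsDomain R] : Prop :=
  ∀ I : Ideal R, I ≠ ⊥ → Finite (R ⧸ I)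

/-- `A` is an `IP⋆`-set in `(R,+)`: it meets the set of finite sums of every sequence. -/
def IPStar {R : Type*} [AddCommSemigroup R] (A : Set R) : Prop :=
  ∀ x : Stream' R, ∃ s ∈ Hindman.FS x, s ∈ A

/-- `B` is an `IP_s⋆`-set in `(R,+)`: it meets
`FS({x_n}_{n=1}^s) = {∑_{n ∈ H} x_n : ∅ ≠ H ⊆ {1, …, s}}` for every finite sequence. -/
def IPrStar {R : Type*} [AddCommMonoid R] (s : ℕ) (B : Set R) : Prop :=
  ∀ x : ℕ → R, ∃ H : Finset ℕ, H ⊆ Finset.Icc 1 s ∧ H.Nonempty ∧ (∑ n ∈ H, x n) ∈ B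

/-!
Multiplication by `v` maps an IP⋆-set to an IP⋆-set whenever `R ⧸ (v)` is finite, and IP⋆-sets
are closed under finite intersections by Hindman's theorem. Choose `c₁, …, c_s` whose nonempty
subset sums `c_H = ∑ i ∈ H, c i` are all nonzero and let `D = ⋂_H c_H • A`. For `r ∈ D` and any
`x`, the IP_s⋆-property of `B` applied to `(c_n x)ₙ` gives `H` with `c_H x ∈ B`, and writing
`r = c_H a` with `a ∈ A` gives `r x = a (c_H x)`.
-/

open Hindman

namespace Hindman

theorem FS.exists_finsetSum {M : Type*} [AddCommMonoid M] {a : Stream' M} {m : M}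
    (hm : m ∈ FS a) : ∃ H : Finset ℕ, H.Nonempty ∧ m = ∑ i ∈ H, a.get i := by
  induction hm with
  | head' a => exact ⟨{0}, Finset.singleton_nonempty 0, by simp [Stream'.head]⟩
  | tail' a m _ ih =>
    obtain ⟨H, hne, rfl⟩ := ih
    exact ⟨H.map (addRightEmbedding 1), hne.map, by simp⟩
  | cons' a m _ ih =>
    obtain ⟨H, -, rfl⟩ := ih
    refine ⟨insert 0 (H.map (addRightEmbedding 1)), Finset.insert_nonempty _ _, ?_⟩
    rw [Finset.sum_insert (by simp)]
    simp [Stream'.head]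

theorem FS.map {M N F : Type*} [AddSemigroup M] [AddSemigroup N] [FunLike F M N]
    [AddHomClass F M N] (f : F) {a : Stream' M} {m : M} (hm : m ∈ FS a) : f m ∈ FS (a.map f) := by
  induction hm with
  | head' a => exact Stream'.head_map f a ▸ FS.head _
  | tail' a m _ ih => exact FS.tail _ _ ih
  | cons' a m _ ih => rw [map_add]; exact FS.cons _ _ ih

theorem FS_blockSums_subset {M : Type*} [AddCommMonoid M] (a : Stream' M) {g : ℕ → ℕ}
    (hg : StrictMono g) : FS (fun j => ∑ i ∈ Finset.Ico (g j) (g (j + 1)), a.get i) ⊆ FS a := by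
  intro m hm
  obtain ⟨J, hJ, rfl⟩ := FS.exists_finsetSum hm
  have hdisj := (pairwise_disjoint_on fun j => Finset.Ico (g j) (g (j + 1))).mpr fun j k hjk =>
      (Finset.Ico_disjoint_Ico_consecutive (g j) (g k) (g (k + 1))).mono_left
        (Finset.Ico_subset_Ico_right (hg.monotone hjk))
  change ∑ j ∈ J, ∑ i ∈ Finset.Ico (g j) (g (j + 1)), a.get i ∈ FS a
  rw [← Finset.sum_biUnion (hdisj.set_pairwise _)]
  refine FS.finsetSum a _ ?_
  obtain ⟨j, hj⟩ := hJ
  exact ⟨g j, Finset.mem_biUnion.mpr ⟨j, hj, Finset.left_mem_Ico.mpr (hg j.lt_succ_self)⟩⟩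

end Hindman

theorem exists_finset_sum_ne_zero {M : Type*} [AddCommGroup M] [Infinite M] (T : Finset ℕ) :
    ∃ c : ℕ → M, ∀ H ⊆ T, H.Nonempty → ∑ i ∈ H, c i ≠ 0 := by
  classical
  induction T using Finset.induction_on with
  | empty => exact ⟨0, fun H hH hne => absurd (Finset.subset_empty.mp hH) hne.ne_empty⟩
  | insert n T hn ih =>
    obtain ⟨c, hc⟩ := ih
    obtain ⟨w, hw⟩ :=
      (T.powerset.image fun H => -∑ i ∈ H, c i).finite_toSet.infinite_compl.nonempty
    refine ⟨Function.update c n w, fun H hH hne => ?_⟩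
    by_cases hnH : n ∈ H
    · rw [Finset.sum_update_of_mem hnH, Finset.sdiff_singleton_eq_erase]
      intro hsum
      refine hw (Finset.mem_image.mpr ⟨H.erase n, ?_, neg_eq_of_add_eq_zero_left hsum⟩)
      exact Finset.mem_powerset.mpr (Finset.subset_insert_iff.mp hH)
    · rw [Finset.sum_update_of_notMem hnH]
      exact hc H ((Finset.subset_insert_iff_of_notMem hnH).mp hH) hne

section IPStar

variable {R : Type*}

theorem IPStar.univ [AddCommSemigroup R] : IPStar (Set.univ : Set R) :=
  fun x => ⟨x.head, FS.head x, trivial⟩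

theorem IPStar.inter [AddCommSemigroup R] {A B : Set R} (hA : IPStar A) (hB : IPStar B) :
    IPStar (A ∩ B) := by
  intro x
  have hcover : FS x ⊆ ⋃₀ {A ∩ FS x, Aᶜ ∩ FS x} := fun y hy => by
    by_cases h : y ∈ A
    · exact Set.mem_sUnion.mpr ⟨_, Set.mem_insert _ _, h, hy⟩
    · exact Set.mem_sUnion.mpr ⟨_, Set.mem_insert_of_mem _ rfl, h, hy⟩
  obtain ⟨C, hC, y, hy⟩ := FS_partition_regular x _ (Set.toFinite _) hcover
  rcases hC with rfl | rfl
  · obtain ⟨t, ht, htB⟩ := hB y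
    exact ⟨t, (hy ht).2, (hy ht).1, htB⟩
  · obtain ⟨t, ht, htA⟩ := hA y
    exact absurd htA (hy ht).1

theorem IPStar.biInter_finset [AddCommSemigroup R] {ι : Type*} (t : Finset ι) {A : ι → Set R}
    (hA : ∀ i ∈ t, IPStar (A i)) : IPStar (⋂ i ∈ t, A i) := by
  classical
  induction t using Finset.induction_on with
  | empty => simpa using IPStar.univ
  | insert i t _ ih =>
    rw [Finset.set_biInter_insert]
    exact (hA i (Finset.mem_insert_self i t)).inter
      (ih fun j hj => hA j (Finset.mem_insert_of_mem hj))

/-- By pigeonhole, infinitely many partial sums of `x` are congruent modulo `v`; the blocks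
of `x` between consecutive such indices are multiples `v * b j`. -/
theorem IPStar.image_mul_left [CommRing R] {A : Set R} (hA : IPStar A) {v : R}
    (hv : Finite (R ⧸ Ideal.span {v})) : IPStar ((v * ·) '' A) := by
  intro x
  set S : ℕ → R := fun n => ∑ i ∈ Finset.range n, x.get i
  obtain ⟨q, hq⟩ := Finite.exists_infinite_fiber fun n => Ideal.Quotient.mk (Ideal.span {v}) (S n)
  have hfiber := Set.infinite_coe_iff.mp hq
  set g := Nat.nth fun n => Ideal.Quotient.mk (Ideal.span {v}) (S n) = q
  have hg : StrictMono g := Nat.nth_strictMono hfiber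
  have hgq : ∀ j, Ideal.Quotient.mk (Ideal.span {v}) (S (g j)) = q :=
    Nat.nth_mem_of_infinite hfiber
  have hblock : ∀ j, ∑ i ∈ Finset.Ico (g j) (g (j + 1)), x.get i ∈ Ideal.span {v} := fun j => by
    rw [Finset.sum_Ico_eq_sub _ (hg j.lt_succ_self).le, ← Ideal.Quotient.eq]
    exact (hgq _).trans (hgq _).symm
  choose b hb using fun j => Ideal.mem_span_singleton.mp (hblock j)
  obtain ⟨t, ht, htA⟩ := hA b
  refine ⟨v * t, FS_blockSums_subset x hg ?_, t, htA, rfl⟩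
  have hbv : Stream'.map (AddMonoidHom.mulLeft v) b =
      fun j => ∑ i ∈ Finset.Ico (g j) (g (j + 1)), x.get i :=
    funext fun j => (hb j).symm
  exact hbv ▸ FS.map (AddMonoidHom.mulLeft v) ht

end IPStar

theorem stmt_9_general {R : Type*} [CommRing R] [IsDomain R] [Infinite R]
    (hR : IsLargeID R) (s : ℕ) (A B : Set R)
    (hA : IPStar A) (hB : IPrStar s B) :
    ∃ D : Set R, IPStar D ∧ ∀ r ∈ D, ∀ x : R, r * x ≠ 0 →
      ∃ a ∈ A, ∃ b ∈ B, r * x = a * b := by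
  obtain ⟨c, hc⟩ := exists_finset_sum_ne_zero (M := R) (Finset.Icc 1 s)
  set P := (Finset.Icc 1 s).powerset.filter Finset.Nonempty
  have hmemP {H : Finset ℕ} : H ∈ P ↔ H ⊆ Finset.Icc 1 s ∧ H.Nonempty := by
    rw [Finset.mem_filter, Finset.mem_powerset]
  refine ⟨⋂ H ∈ P, ((∑ i ∈ H, c i) * ·) '' A, ?_, ?_⟩
  · refine IPStar.biInter_finset P fun H hH => hA.image_mul_left (hR _ ?_)
    rw [Ne, Ideal.span_singleton_eq_bot]
    exact hc H (hmemP.mp hH).1 (hmemP.mp hH).2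
  · intro r hr x _
    obtain ⟨H, hHs, hne, hHB⟩ := hB fun n => c n * x
    obtain ⟨a, ha, rfl⟩ := Set.mem_iInter₂.mp hr H (hmemP.mpr ⟨hHs, hne⟩)
    exact ⟨a, ha, _, hHB, by rw [← Finset.sum_mul]; ring⟩

/-- If `R` is an infinite large integral domain, `A` an `IP⋆`-set and `B` an
`IP_s⋆`-set in `(R,+)`, then there is an `IP⋆`-set `D` such that
`rR \ {0} ⊆ A·B` for every `r ∈ D`. -/
theorem stmt_9 {R : Type*} [CommRing R] [IsDomain R] [Infinite R]
    (hR : IsLargeID R) (s : ℕ) (hs : 0 < s) (A B : Set R)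
    (hA : IPStar A) (hB : IPrStar s B) :
    ∃ D : Set R, IPStar D ∧ ∀ r ∈ D, ∀ x : R, r * x ≠ 0 →
      ∃ a ∈ A, ∃ b ∈ B, r * x = a * b :=
  stmt_9_general hR s A B hA hB
end

section
/- Let R be an infinite large integral domain and A ⊆ R an additive central*-set. Then A is multiplicatively thick in (R \ {0}, ·): for every finite set F ⊆ R \ {0} there exists a ∈ A with Fa ⊆ A. -/
/-- Product of ultrafilters on a semigroup `S` (the restriction to `βS` of the
Stone–Čech extension of the multiplication):
`A ∈ umul p q ↔ {x | {y | x * y ∈ A} ∈ q} ∈ p`. -/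
def umul {S : Type*} [Semigroup S] (p q : Ultrafilter S) : Ultrafilter S :=
  p.bind fun x => q.map (x * ·)

/-- `p` is a minimal idempotent of `(βS, ·)`: `p` is idempotent and minimal for the
order `q ≤ p ↔ q·p = p·q = q` on idempotents. -/
def IsMinimalIdempotent {S : Type*} [Semigroup S] (p : Ultrafilter S) : Prop :=
  umul p p = p ∧ ∀ q : Ultrafilter S, umul q q = q →
    umul q p = q → umul p q = q → q = p

/-- `A` is central in the semigroup `(S, ·)`: `A` belongs to some minimal idempotent
ultrafilter. -/
def Central {S : Type*} [Semigroup S] (A : Set S) : Prop :=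
  ∃ p : Ultrafilter S, IsMinimalIdempotent p ∧ A ∈ p

/-- Sum of ultrafilters on an additive semigroup `S`:
`A ∈ uadd p q ↔ {x | {y | x + y ∈ A} ∈ q} ∈ p`. -/
def uadd {S : Type*} [AddSemigroup S] (p q : Ultrafilter S) : Ultrafilter S :=
  p.bind fun x => q.map (x + ·)

/-- `p` is a minimal idempotent of `(βS, +)`. -/
def IsMinimalIdempotentAdd {S : Type*} [AddSemigroup S] (p : Ultrafilter S) : Prop :=
  uadd p p = p ∧ ∀ q : Ultrafilter S, uadd q q = q →
    uadd q p = q → uadd p q = q → q = p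

/-- `A` is central in the additive semigroup `(S, +)`. -/
def AddCentral {S : Type*} [AddSemigroup S] (A : Set S) : Prop :=
  ∃ p : Ultrafilter S, IsMinimalIdempotentAdd p ∧ A ∈ p

/-- The multiplicative semigroup `(R \ {0}, ·)` of an integral domain. -/
instance nzSemigroup {R : Type*} [CommRing R] [IsDomain R] :
    Semigroup {x : R // x ≠ 0} where
  mul a b := ⟨a.1 * b.1, mul_ne_zero a.2 b.2⟩
  mul_assoc a b c := Subtype.ext (mul_assoc a.1 b.1 c.1)

/-- `A ⊆ R` is multiplicatively central in `(R \ {0}, ·)`. -/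
def MulCentralNZ {R : Type*} [CommRing R] [IsDomain R] (A : Set R) : Prop :=
  Central {x : {x : R // x ≠ 0} | (x : R) ∈ A}

/-- `A` is an additive central⋆-set: `A` meets every additive central set. -/
def AddCentralStar {S : Type*} [AddSemigroup S] (A : Set S) : Prop :=
  ∀ C : Set S, AddCentral C → (A ∩ C).Nonempty

section Aux

attribute [local instance] Ultrafilter.add Ultrafilter.addSemigroup

variable {S : Type*} [AddSemigroup S]

lemma mem_uadd {p q : Ultrafilter S} {A : Set S} :
    A ∈ uadd p q ↔ {x | {y | x + y ∈ A} ∈ q} ∈ p := Iff.rfl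

lemma uadd_eq_add (p q : Ultrafilter S) : uadd p q = p + q :=
  Ultrafilter.ext fun A => Iff.rfl

lemma uadd_assoc (p q r : Ultrafilter S) : uadd (uadd p q) r = uadd p (uadd q r) := by
  simp only [uadd_eq_add, add_assoc]

lemma mem_congr {p : Ultrafilter S} {I : Set S} (hI : I ∈ p) {P Q : Set S}
    (h : ∀ x ∈ I, x ∈ P ↔ x ∈ Q) : P ∈ p ↔ Q ∈ p := by
  constructor <;> intro hP <;>
    [ exact Ultrafilter.mem_coe.mp (Filter.mem_of_superset
        (Filter.inter_mem (Ultrafilter.mem_coe.mpr hI) (Ultrafilter.mem_coe.mpr hP))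
        fun x hx => (h x hx.1).1 hx.2) ;
      exact Ultrafilter.mem_coe.mp (Filter.mem_of_superset
        (Filter.inter_mem (Ultrafilter.mem_coe.mpr hI) (Ultrafilter.mem_coe.mpr hP))
        fun x hx => (h x hx.1).2 hx.2) ]

/-- Existence of a minimal idempotent in `(βS, +)`. -/
lemma exists_minimal_idempotent_add [Nonempty S] :
    ∃ p : Ultrafilter S, IsMinimalIdempotentAdd p := by
  let 𝒮 : Set (Set (Ultrafilter S)) :=
    {L | L.Nonempty ∧ IsClosed L ∧ ∀ p, ∀ q ∈ L, uadd p q ∈ L}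
  have hzorn : ∀ c ⊆ 𝒮, IsChain (· ⊆ ·) c → c.Nonempty →
      ∃ lb ∈ 𝒮, ∀ s ∈ c, lb ⊆ s := by
    intro c hc hchain hcne
    refine ⟨⋂₀ c, ⟨?_, isClosed_sInter fun t ht => (hc ht).2.1, ?_⟩,
      fun s hs => Set.sInter_subset_of_mem hs⟩
    · have : Nonempty c := hcne.coe_sort
      have := IsCompact.nonempty_iInter_of_directed_nonempty_isCompact_isClosed
        ((↑) : c → Set (Ultrafilter S))
        (DirectedOn.directed_val (IsChain.directedOn hchain.symm))
        (fun i => (hc i.prop).1) (fun i => (hc i.prop).2.1.isCompact)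
        (fun i => (hc i.prop).2.1)
      rwa [Set.sInter_eq_iInter]
    · intro p q hq
      rw [Set.mem_sInter] at hq ⊢
      exact fun t ht => (hc ht).2.2 p q (hq t ht)
  obtain ⟨L, -, hLmin⟩ := zorn_superset_nonempty 𝒮 hzorn Set.univ
    ⟨Set.univ_nonempty, isClosed_univ, fun _ _ _ => Set.mem_univ _⟩
  obtain ⟨hLne, hLcl, hLid⟩ := hLmin.prop
  obtain ⟨p, hpL, hpp⟩ := exists_idempotent_in_compact_add_subsemigroup
    (fun r => Ultrafilter.continuous_add_left r) L hLne hLcl.isCompact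
    (fun x hx y hy => hLid x y hy)
  refine ⟨p, ?_, ?_⟩
  · rw [uadd_eq_add]; exact hpp
  · intro q hqq hqp hpq
    have hqL : q ∈ L := hqp ▸ hLid q p hpL
    set K : Set (Ultrafilter S) := (fun t => uadd t q) '' Set.univ with hK
    have hKL : K ⊆ L := by
      rintro _ ⟨t, -, rfl⟩; exact hLid t q hqL
    have hKS : K ∈ 𝒮 := by
      refine ⟨⟨uadd q q, q, Set.mem_univ _, rfl⟩, ?_, ?_⟩
      · have : IsCompact K := by
          apply IsCompact.image isCompact_univ
          have := Ultrafilter.continuous_add_left q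
          simpa only [uadd_eq_add] using this
        exact this.isClosed
      · rintro t _ ⟨u, -, rfl⟩
        exact ⟨uadd t u, Set.mem_univ _, show uadd (uadd t u) q = uadd t (uadd u q)
          from uadd_assoc t u q⟩
    have hKeq : K = L := hLmin.eq_of_subset hKS hKL
    obtain ⟨t, -, htp⟩ : p ∈ K := hKeq ▸ hpL
    have hpq' : uadd p q = p := by
      rw [← htp, uadd_assoc, hqq]
    rw [hpq] at hpq'
    exact hpq'

end Aux

section Aux2

variable {S : Type*} [AddSemigroup S]

lemma map_uadd {T : Type*} [AddSemigroup T] (f : S → T)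
    (hf : ∀ x y, f (x + y) = f x + f y) (p q : Ultrafilter S) :
    (uadd p q).map f = uadd (p.map f) (q.map f) := by
  refine Ultrafilter.ext fun A => ?_
  have lhs : (A ∈ (uadd p q).map f) ↔ {x | {y | f (x + y) ∈ A} ∈ q} ∈ p := Iff.rfl
  have rhs : (A ∈ uadd (p.map f) (q.map f)) ↔
      {x | {y | f x + f y ∈ A} ∈ q} ∈ p := Iff.rfl
  rw [lhs, rhs]
  simp only [hf]

lemma map_minimal_idempotent {R : Type*} [CommRing R] [IsDomain R]
    (hR : IsLargeID R) {r : R} (hr : r ≠ 0) {q : Ultrafilter R}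
    (hq : IsMinimalIdempotentAdd q) :
    IsMinimalIdempotentAdd (q.map (r * ·)) := by
  haveI : Nonempty R := ⟨0⟩
  set f : R → R := (r * ·) with hfdef
  have hf : ∀ x y, f (x + y) = f x + f y := fun x y => mul_add r x y
  have finj : Function.Injective f := mul_right_injective₀ hr
  -- the range of f belongs to every additive idempotent ultrafilter
  have hrange : ∀ s : Ultrafilter R, uadd s s = s → Set.range f ∈ s := by
    intro s hs
    have hJne : Ideal.span {r} ≠ (⊥ : Ideal R) := by
      simp [Ideal.span_singleton_eq_bot, hr]
    haveI : Finite (R ⧸ Ideal.span {r}) := hR _ hJne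
    set π : R → R ⧸ Ideal.span {r} := fun x => Ideal.Quotient.mk _ x with hπ
    obtain ⟨c, hc⟩ := (s.map π).eq_pure_of_finite
    have hcs : {x | π x = c} ∈ s := by
      have : {c} ∈ s.map π := by rw [hc]; exact Filter.mem_pure.mpr rfl
      rw [Ultrafilter.mem_map] at this
      exact this
    have h1 : {x | {y | x + y ∈ {x | π x = c}} ∈ s} ∈ s := by
      rw [← mem_uadd, hs]; exact hcs
    obtain ⟨x, hx1, hx2⟩ := Ultrafilter.nonempty_of_mem (Filter.inter_mem
      (Ultrafilter.mem_coe.mpr hcs) (Ultrafilter.mem_coe.mpr h1))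
    have hx1' : π x = c := hx1
    have hadd : ∀ a b : R, π (a + b) = π a + π b :=
      fun a b => map_add (Ideal.Quotient.mk _) a b
    have hker : {y | π y = 0} ∈ s := by
      have hset : {y | x + y ∈ {x | π x = c}} = {y | π y = 0} := by
        ext y
        show π (x + y) = c ↔ π y = 0
        rw [hadd, hx1']
        constructor
        · intro h; exact add_eq_left.mp h
        · intro h; rw [h, add_zero]
      rw [← hset]; exact hx2
    have hset2 : {y | π y = 0} = Set.range f := by
      ext y
      constructor
      · intro hy
        have hmem : y ∈ Ideal.span {r} := Ideal.Quotient.eq_zero_iff_mem.mp hy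
        obtain ⟨cc, hcc⟩ := Ideal.mem_span_singleton.mp hmem
        exact ⟨cc, hcc.symm⟩
      · rintro ⟨a, rfl⟩
        show Ideal.Quotient.mk _ (f a) = 0
        rw [Ideal.Quotient.eq_zero_iff_mem]
        exact Ideal.mem_span_singleton.mpr ⟨a, rfl⟩
    rwa [hset2] at hker
  constructor
  · rw [← map_uadd f hf, hq.1]
  · intro s hss hs1 hs2
    have hIs : Set.range f ∈ s := hrange s hss
    set h : R → R := Function.invFun f with hh
    have hinv : ∀ x, h (f x) = x := Function.leftInverse_invFun finj
    have hinv2 : ∀ a b : R, h (f a + f b) = a + b := fun a b => by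
      rw [← hf, hinv]
    set s₀ : Ultrafilter R := s.map h with hs₀
    have key1 : s₀.map f = s := by
      refine Ultrafilter.ext fun A => ?_
      have lhs : (A ∈ s₀.map f) ↔ {x | f (h x) ∈ A} ∈ s := Iff.rfl
      rw [lhs]
      refine mem_congr hIs fun x hx => ?_
      obtain ⟨a, rfl⟩ := hx
      show f (h (f a)) ∈ A ↔ f a ∈ A
      rw [hinv]
    have e1 : uadd s₀ s₀ = s₀ := by
      refine Ultrafilter.ext fun A => ?_
      have lhs : (A ∈ uadd s₀ s₀) ↔ {x | {y | h x + h y ∈ A} ∈ s} ∈ s := Iff.rfl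
      have rhs : (A ∈ s₀) ↔ {x | h x ∈ A} ∈ s := Iff.rfl
      have step := @mem_uadd R _ s s {x | h x ∈ A}
      rw [hss] at step
      rw [lhs, rhs, step]
      refine mem_congr hIs fun x hx => ?_
      obtain ⟨a, rfl⟩ := hx
      show ({y | h (f a) + h y ∈ A} ∈ s) ↔ ({y | h (f a + y) ∈ A} ∈ s)
      refine mem_congr hIs fun y hy => ?_
      obtain ⟨b, rfl⟩ := hy
      show (h (f a) + h (f b) ∈ A) ↔ (h (f a + f b) ∈ A)
      rw [hinv, hinv, hinv2]
    have e2 : uadd s₀ q = s₀ := by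
      refine Ultrafilter.ext fun A => ?_
      have lhs : (A ∈ uadd s₀ q) ↔ {x | {y | h x + y ∈ A} ∈ q} ∈ s := Iff.rfl
      have rhs : (A ∈ s₀) ↔ {x | h x ∈ A} ∈ s := Iff.rfl
      have step := @mem_uadd R _ s (q.map f) {x | h x ∈ A}
      rw [hs1] at step
      rw [lhs, rhs, step]
      refine mem_congr hIs fun x hx => ?_
      obtain ⟨a, rfl⟩ := hx
      show ({y | h (f a) + y ∈ A} ∈ q) ↔ ({y | h (f a + f y) ∈ A} ∈ q)
      have hset : {y | h (f a) + y ∈ A} = {y | h (f a + f y) ∈ A} := by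
        ext y
        show h (f a) + y ∈ A ↔ h (f a + f y) ∈ A
        rw [hinv, hinv2]
      rw [hset]
    have e3 : uadd q s₀ = s₀ := by
      refine Ultrafilter.ext fun A => ?_
      have lhs : (A ∈ uadd q s₀) ↔ {x | {y | x + h y ∈ A} ∈ s} ∈ q := Iff.rfl
      have rhs : (A ∈ s₀) ↔ {x | h x ∈ A} ∈ s := Iff.rfl
      have step := @mem_uadd R _ (q.map f) s {x | h x ∈ A}
      rw [hs2] at step
      rw [lhs, rhs, step, Ultrafilter.mem_map]
      have hsets : f ⁻¹' {x | {y | x + y ∈ {x | h x ∈ A}} ∈ s} =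
          {x | {y | x + h y ∈ A} ∈ s} := by
        ext x
        show ({y | h (f x + y) ∈ A} ∈ s) ↔ ({y | x + h y ∈ A} ∈ s)
        refine mem_congr hIs fun y hy => ?_
        obtain ⟨b, rfl⟩ := hy
        show h (f x + f b) ∈ A ↔ x + h (f b) ∈ A
        rw [hinv2, hinv]
      rw [hsets]
    have hfin := hq.2 s₀ e1 e2 e3
    rw [← key1, hfin]

end Aux2

/-- In an infinite large integral domain, every additive central⋆-set `A` is
multiplicatively thick in `(R \ {0}, ·)`: for every finite `F ⊆ R \ {0}` there is
`a ∈ A` with `Fa ⊆ A`. -/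
theorem stmt_14 {R : Type*} [CommRing R] [IsDomain R] [Infinite R]
    (hR : IsLargeID R) (A : Set R) (hA : AddCentralStar A) :
    ∀ F : Finset R, (∀ x ∈ F, x ≠ 0) → ∃ a ∈ A, ∀ x ∈ F, x * a ∈ A := by
  intro F hF
  haveI : Nonempty R := ⟨0⟩
  obtain ⟨q, hq⟩ := exists_minimal_idempotent_add (S := R)
  have hmem : ∀ p : Ultrafilter R, IsMinimalIdempotentAdd p → A ∈ p := by
    intro p hp
    by_contra hnot
    have hc : Aᶜ ∈ p := Ultrafilter.compl_mem_iff_notMem.mpr hnot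
    obtain ⟨x, hx1, hx2⟩ := hA Aᶜ ⟨p, hp, hc⟩
    exact hx2 hx1
  have hAq : A ∈ q := hmem q hq
  have hxq : ∀ x ∈ F, {a | x * a ∈ A} ∈ q := by
    intro x hx
    have hmin := map_minimal_idempotent hR (hF x hx) hq
    have hAm : A ∈ q.map (x * ·) := hmem _ hmin
    rw [Ultrafilter.mem_map] at hAm
    exact hAm
  have hB : (A ∩ ⋂ x ∈ F, {a | x * a ∈ A}) ∈ (q : Filter R) := by
    refine Filter.inter_mem (Ultrafilter.mem_coe.mpr hAq) ?_
    exact (Filter.biInter_mem F.finite_toSet).mpr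
      (fun x hx => Ultrafilter.mem_coe.mpr (hxq x hx))
  obtain ⟨a, haA, haI⟩ := Filter.nonempty_of_mem hB
  exact ⟨a, haA, fun x hx => Set.mem_iInter₂.mp haI x hx⟩
end
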